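/- The call-by-name linear substitution calculus is deterministic: if H₁⟨r₁⟩ = H₂⟨r₂⟩ where H₁, H₂ are weak head contexts (generated by H ::= ⟨·⟩ | H t | H[x←t]) and r₁, r₂ are redexes (terms matching the left-hand side of the dB or ls root rules), then H₁ = H₂ and r₁ = r₂. -/

import Mathlib

/-!
A redex never occurs strictly inside another redex along its weak head spine. Such an occurrence
would lie in the function part `L⟨λx.t⟩` of a `dB` redex or in the body `H⟨x⟩` (with `x` not
captured by `H`) of an `ls` redex, and a weak head context filled with a redex has neither shape.
Hence `H₁⟨r₁⟩ = H₂⟨r₂⟩` forces `H₁` and `H₂` to peel off the same constructors down to the hole.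
-/

/-- Terms of the linear substitution calculus:
    `sub t x u` is the explicit substitution `t[x←u]`. -/
inductive Term : Type
  | var : ℕ → Term
  | lam : ℕ → Term → Term
  | app : Term → Term → Term
  | sub : Term → ℕ → Term → Term
deriving DecidableEq

namespace Term

/-- Free variables. -/
def fv : Term → Finset ℕ
  | var x => {x}
  | lam x t => t.fv.erase x
  | app t u => t.fv ∪ u.fv
  | sub t x u => t.fv.erase x ∪ u.fv

end Term

/-- Substitution contexts `L ::= ⟨·⟩ | L[x←t]`. -/
inductive LCtx : Type
  | hole : LCtx
  | sub : LCtx → ℕ → Term → LCtx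
deriving DecidableEq

def LCtx.plug : LCtx → Term → Term
  | .hole, t => t
  | .sub L x u, t => .sub (L.plug t) x u

/-- Weak head contexts `H ::= ⟨·⟩ | H t | H[x←t]`. -/
inductive HCtx : Type
  | hole : HCtx
  | app : HCtx → Term → HCtx
  | sub : HCtx → ℕ → Term → HCtx
deriving DecidableEq

def HCtx.plug : HCtx → Term → Term
  | .hole, t => t
  | .app H u, t => .app (H.plug t) u
  | .sub H x u, t => .sub (H.plug t) x u

/-- `H.captures x` holds when the hole of `H` lies under a binder for `x`. -/
def HCtx.captures : HCtx → ℕ → Prop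
  | .hole, _ => False
  | .app H _, x => H.captures x
  | .sub H y _, x => y = x ∨ H.captures x

/-- Free variables of a weak head context. -/
def HCtx.fv : HCtx → Finset ℕ
  | .hole => ∅
  | .app H t => H.fv ∪ t.fv
  | .sub H y t => H.fv.erase y ∪ t.fv

/-- Multiplicative (weak-head distance-β) reduction:
    the closure under weak head contexts of `L⟨λx.t⟩ u ↦ L⟨t[x←u]⟩`. -/
inductive Rm : Term → Term → Prop
  | step (H : HCtx) (L : LCtx) (x : ℕ) (t u : Term) :
      Rm (H.plug (.app (L.plug (.lam x t)) u)) (H.plug (L.plug (.sub t x u)))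

/-- Exponential (weak linear head substitution) reduction:
    the closure under weak head contexts of `H'⟨x⟩[x←u] ↦ H'⟨u⟩[x←u]`,
    with `x` not captured by `H'`. -/
inductive Re : Term → Term → Prop
  | step (H H' : HCtx) (x : ℕ) (u : Term) :
      ¬ H'.captures x →
      Re (H.plug (.sub (H'.plug (.var x)) x u)) (H.plug (.sub (H'.plug u) x u))

/-- A redex of the call-by-name LSC: a term matching the left-hand side of
    the `dB` or `ls` root rules. -/
def IsRedex (r : Term) : Prop :=
  (∃ (L : LCtx) (x : ℕ) (t u : Term), r = Term.app (L.plug (.lam x t)) u) ∨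
  (∃ (H : HCtx) (x : ℕ) (u : Term), ¬ H.captures x ∧ r = Term.sub (H.plug (.var x)) x u)

namespace HCtx

theorem plug_var_ne_plug_lam (H : HCtx) (L : LCtx) (x y : ℕ) (t : Term) :
    H.plug (.var x) ≠ L.plug (.lam y t) := by
  induction L generalizing H with
  | hole => cases H <;> simp [plug, LCtx.plug]
  | sub L z u ih => cases H <;> simp [plug, LCtx.plug, ih]

theorem plug_var_inj {H₁ H₂ : HCtx} {x y : ℕ} (h : H₁.plug (.var x) = H₂.plug (.var y)) :
    H₁ = H₂ ∧ x = y := by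
  induction H₁ generalizing H₂ with
  | hole => cases H₂ <;> simp_all [plug]
  | app H₁ t ih =>
    cases H₂ with
    | app H₂ t' =>
      obtain ⟨hH, rfl⟩ := Term.app.inj h
      obtain ⟨rfl, rfl⟩ := ih hH
      exact ⟨rfl, rfl⟩
    | _ => simp [plug] at h
  | sub H₁ z u ih =>
    cases H₂ with
    | sub H₂ z' u' =>
      obtain ⟨hH, rfl, rfl⟩ := Term.sub.inj h
      obtain ⟨rfl, rfl⟩ := ih hH
      exact ⟨rfl, rfl⟩
    | _ => simp [plug] at h

end HCtx

namespace IsRedex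

variable {r : Term}

theorem plug_ne_plug_lam (hr : IsRedex r) (H : HCtx) (L : LCtx) (y : ℕ) (t : Term) :
    H.plug r ≠ L.plug (.lam y t) := by
  induction L generalizing H with
  | hole =>
    rcases hr with ⟨_, _, _, _, rfl⟩ | ⟨_, _, _, _, rfl⟩ <;> cases H <;> simp [HCtx.plug, LCtx.plug]
  | sub L z u ih =>
    cases H with
    | hole =>
      rcases hr with ⟨_, _, _, _, rfl⟩ | ⟨H', x, v, -, rfl⟩
      · simp [HCtx.plug, LCtx.plug]
      · simp [HCtx.plug, LCtx.plug, H'.plug_var_ne_plug_lam L x y t]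
    | app => simp [HCtx.plug, LCtx.plug]
    | sub H' => simp [HCtx.plug, LCtx.plug, ih H']

theorem plug_ne_plug_var (hr : IsRedex r) (H : HCtx) {H' : HCtx} {x : ℕ}
    (hx : ¬ H'.captures x) : H.plug r ≠ H'.plug (.var x) := by
  induction H' generalizing H with
  | hole => rcases hr with ⟨_, _, _, _, rfl⟩ | ⟨_, _, _, _, rfl⟩ <;> cases H <;> simp [HCtx.plug]
  | app H' t ih =>
    cases H with
    | hole =>
      rcases hr with ⟨L, y, s, v, rfl⟩ | ⟨_, _, _, _, rfl⟩
      · simp [HCtx.plug, (H'.plug_var_ne_plug_lam L x y s).symm]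
      · simp [HCtx.plug]
    | app H t' => simp [HCtx.plug, ih H hx]
    | sub => simp [HCtx.plug]
  | sub H' y s ih =>
    simp only [HCtx.captures, not_or] at hx
    cases H with
    | hole =>
      rcases hr with ⟨_, _, _, _, rfl⟩ | ⟨H₀, z, v, -, rfl⟩
      · simp [HCtx.plug]
      · intro h
        obtain ⟨hvar, rfl, -⟩ := Term.sub.inj h
        exact hx.1 (HCtx.plug_var_inj hvar).2
    | app => simp [HCtx.plug]
    | sub H => simp [HCtx.plug, ih H hx.2]

theorem eq_hole_of_eq_plug {s : Term} (hr : IsRedex r) (hs : IsRedex s) {H : HCtx}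
    (h : r = H.plug s) : H = .hole := by
  cases H with
  | hole => rfl
  | app H t =>
    rcases hr with ⟨L, x, t', u, rfl⟩ | ⟨_, _, _, _, rfl⟩
    · exact absurd (Term.app.inj h).1.symm (hs.plug_ne_plug_lam H L x t')
    · simp [HCtx.plug] at h
  | sub H y t =>
    rcases hr with ⟨_, _, _, _, rfl⟩ | ⟨H', x, u, hx, rfl⟩
    · simp [HCtx.plug] at h
    · exact absurd (Term.sub.inj h).1.symm (hs.plug_ne_plug_var H hx)

end IsRedex

/-- Determinism of the call-by-name linear substitution calculus. -/
theorem name_determinism (H₁ H₂ : HCtx) (r₁ r₂ : Term)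
    (h₁ : IsRedex r₁) (h₂ : IsRedex r₂)
    (heq : H₁.plug r₁ = H₂.plug r₂) :
    H₁ = H₂ ∧ r₁ = r₂ := by
  induction H₁ generalizing H₂ with
  | hole =>
    obtain rfl := h₁.eq_hole_of_eq_plug h₂ heq
    exact ⟨rfl, heq⟩
  | app H₁ t ih =>
    cases H₂ with
    | hole => cases h₂.eq_hole_of_eq_plug h₁ heq.symm
    | app H₂ t' =>
      obtain ⟨hH, rfl⟩ := Term.app.inj heq
      obtain ⟨rfl, rfl⟩ := ih H₂ hH
      exact ⟨rfl, rfl⟩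
    | sub => simp [HCtx.plug] at heq
  | sub H₁ y t ih =>
    cases H₂ with
    | hole => cases h₂.eq_hole_of_eq_plug h₁ heq.symm
    | app => simp [HCtx.plug] at heq
    | sub H₂ y' t' =>
      obtain ⟨hH, rfl, rfl⟩ := Term.sub.inj heq
      obtain ⟨rfl, rfl⟩ := ih H₂ hH
      exact ⟨rfl, rfl⟩
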